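/- Let (R_1^{(t)},…,R_M^{(t)}) be the iterates of Algorithm 1 (max-density mean alignment): R_i^{(t)} = U_i V_iᵀ where U_i S_i V_iᵀ is the SVD of H_i^{(t)} = Σ_j w_{ij} k_{ij}^{(t−1)} R_j^{(t−1)} μ_j μ_iᵀ + η R_i^{(t−1)}, with w_{ij} = exp(−γ(‖μ_i‖²+‖μ_j‖²)) and k_{ij}^{(t−1)} = exp(2γ⟨R_i^{(t−1)}μ_i, R_j^{(t−1)}μ_j⟩). Then for every t ≥ 1 and any η > 0, L(R_1^{(t)},…,R_M^{(t)}) ≥ L(R_1^{(t−1)},…,R_M^{(t−1)}) + 2γη Σ_{i=1}^M ‖R_i^{(t)} − R_i^{(t−1)}‖_F², where L(R_1,…,R_M) = Σ_{i,j} exp(−γ‖R_i μ_i − R_j μ_j‖²). -/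

import Mathlib

open Matrix
open scoped BigOperators

noncomputable section

/-- Squared Euclidean norm of a vector. -/
def sqnorm {d : ℕ} (v : Fin d → ℝ) : ℝ := ∑ k, v k ^ 2

/-- Squared Frobenius norm of a matrix. -/
def frobSq {d : ℕ} (A : Matrix (Fin d) (Fin d) ℝ) : ℝ := ∑ a, ∑ b, (A a b) ^ 2

/-- The weights `w_{ij} = exp(−γ(‖μ_i‖²+‖μ_j‖²))` of Algorithm 1. -/
def wCoef {M d : ℕ} (γ : ℝ) (μ : Fin M → (Fin d → ℝ)) (i j : Fin M) : ℝ :=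
  Real.exp (-γ * (sqnorm (μ i) + sqnorm (μ j)))

/-- The coefficients `k_{ij} = exp(2γ⟨R_i μ_i, R_j μ_j⟩)` of Algorithm 1. -/
def kCoef {M d : ℕ} (γ : ℝ) (μ : Fin M → (Fin d → ℝ))
    (R : Fin M → Matrix (Fin d) (Fin d) ℝ) (i j : Fin M) : ℝ :=
  Real.exp (2 * γ * (((R i).mulVec (μ i)) ⬝ᵥ ((R j).mulVec (μ j))))

/-- The matrices `H_i = Σ_j w_{ij} k_{ij} R_j μ_j μ_iᵀ + η R_i` of Algorithm 1. -/
def Hmat {M d : ℕ} (γ η : ℝ) (μ : Fin M → (Fin d → ℝ))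
    (R : Fin M → Matrix (Fin d) (Fin d) ℝ) (i : Fin M) :
    Matrix (Fin d) (Fin d) ℝ :=
  (∑ j, (wCoef γ μ i j * kCoef γ μ R i j) •
      Matrix.vecMulVec ((R j).mulVec (μ j)) (μ i)) + η • R i

/-- The density objective `L(R_1,…,R_M) = Σ_{i,j} exp(−γ‖R_i μ_i − R_j μ_j‖²)`. -/
def Lobj {M d : ℕ} (γ : ℝ) (μ : Fin M → (Fin d → ℝ))
    (R : Fin M → Matrix (Fin d) (Fin d) ℝ) : ℝ :=
  ∑ i, ∑ j, Real.exp (-γ * sqnorm ((R i).mulVec (μ i) - (R j).mulVec (μ j)))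

end

/-!
The objective is a sum of Gaussian kernel values `exp (-γ ‖R_i μ_i - R_j μ_j‖²)`. Since the `R_i`
are orthogonal, the exponent is `-γ (‖μ_i‖² + ‖μ_j‖²) + 2γ ⟨R_i μ_i, R_j μ_j⟩`, so convexity of
`exp` bounds the gain from below by `2γ` times the kernel-weighted change of the inner products.
Writing `R'_i` for the previous iterate and `u_i = R_i μ_i - R'_i μ_i`, that change splits into a
quadratic part `Σ K_ij ⟨u_i, u_j⟩`, nonnegative because the Gaussian kernel matrix is positive
semidefinite (Schur product theorem applied to the exponential series), and twice a linear part
`Σ_i ⟪R_i - R'_i, H_i - η R'_i⟫_F`. The new iterate `R_i` maximises `⟪Q, H_i⟫_F` over orthogonal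
`Q` (Procrustes), which bounds each linear term by `η/2 ‖R_i - R'_i‖_F²`.
-/

namespace Matrix

variable {ι : Type*} [Fintype ι]

theorem PosSemidef.map_pow {A : Matrix ι ι ℝ} (hA : A.PosSemidef) (n : ℕ) :
    (A.map (· ^ n)).PosSemidef := by
  induction n with
  | zero =>
    convert posSemidef_vecMulVec_self_star (1 : ι → ℝ)
    ext; simp [vecMulVec_apply]
  | succ n ih =>
    have h : A.map (· ^ (n + 1)) = A.map (· ^ n) ⊙ A := by ext; simp [pow_succ]
    exact h ▸ ih.hadamard hA

theorem PosSemidef.map_exp {A : Matrix ι ι ℝ} (hA : A.PosSemidef) :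
    (A.map Real.exp).PosSemidef := by
  refine .of_dotProduct_mulVec_nonneg (hA.isHermitian.map _ fun _ => rfl) fun x => ?_
  have hseries : HasSum (fun n => ∑ i, ∑ j, star x i * (A i j ^ n / n.factorial * x j))
      (∑ i, ∑ j, star x i * (Real.exp (A i j) * x j)) := by
    refine hasSum_sum fun i _ => hasSum_sum fun j _ => ?_
    rw [Real.exp_eq_exp_ℝ]
    exact ((NormedSpace.expSeries_div_hasSum_exp (A i j)).mul_right (x j)).mul_left (star x i)
  convert hseries.nonneg fun n => ?_ using 1
  · simp [dotProduct, mulVec, Finset.mul_sum]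
  · calc (0 : ℝ) ≤ (n.factorial : ℝ)⁻¹ * (star x ⬝ᵥ (A.map (· ^ n) *ᵥ x)) :=
          mul_nonneg (by positivity) ((hA.map_pow n).dotProduct_mulVec_nonneg x)
      _ = _ := by
        simp only [dotProduct, mulVec, map_apply, Finset.mul_sum]
        exact Finset.sum_congr rfl fun i _ => Finset.sum_congr rfl fun j _ => by ring

theorem PosSemidef.sum_mul_dotProduct_nonneg {κ : Type*} [Fintype κ] {E : Matrix ι ι ℝ}
    (hE : E.PosSemidef) (y : ι → κ → ℝ) : 0 ≤ ∑ i, ∑ j, E i j * (y i ⬝ᵥ y j) := by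
  have h := (hE.hadamard (posSemidef_self_mul_conjTranspose (of y))).dotProduct_mulVec_nonneg 1
  simpa [dotProduct, mulVec, hadamard_apply, mul_apply] using h

end Matrix

section Vectors

variable {d : ℕ}

theorem sqnorm_eq_dotProduct (v : Fin d → ℝ) : sqnorm v = v ⬝ᵥ v := by
  simp [sqnorm, dotProduct, sq]

theorem sqnorm_sub (v w : Fin d → ℝ) : sqnorm (v - w) = sqnorm v + sqnorm w - 2 * (v ⬝ᵥ w) := by
  simp only [sqnorm_eq_dotProduct, sub_dotProduct, dotProduct_sub, dotProduct_comm w v]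
  ring

theorem sqnorm_mulVec_of_transpose_mul_self {Q : Matrix (Fin d) (Fin d) ℝ} (hQ : Qᵀ * Q = 1)
    (v : Fin d → ℝ) : sqnorm (Q *ᵥ v) = sqnorm v := by
  rw [sqnorm_eq_dotProduct, sqnorm_eq_dotProduct, dotProduct_mulVec, ← mulVec_transpose,
    mulVec_mulVec, hQ, one_mulVec]

end Vectors

noncomputable def gaussianKernel {ι : Type*} {d : ℕ} (γ : ℝ) (x : ι → Fin d → ℝ) : Matrix ι ι ℝ :=
  of fun i j => Real.exp (-γ * sqnorm (x i - x j))

theorem gaussianKernel_eq {ι : Type*} {d : ℕ} (γ : ℝ) (x : ι → Fin d → ℝ) (i j : ι) :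
    gaussianKernel γ x i j = Real.exp (-γ * (sqnorm (x i) + sqnorm (x j)))
      * Real.exp (2 * γ * (x i ⬝ᵥ x j)) := by
  rw [gaussianKernel, of_apply, ← Real.exp_add, sqnorm_sub]
  ring_nf

theorem posSemidef_gaussianKernel {ι : Type*} [Fintype ι] {d : ℕ} {γ : ℝ} (hγ : 0 ≤ γ)
    (x : ι → Fin d → ℝ) : (gaussianKernel γ x).PosSemidef := by
  classical
  -- `K = D (exp ∘ 2γ Gram(x)) D` with `D = diag (exp (-γ ‖x_i‖²))`
  have hgram := (posSemidef_self_mul_conjTranspose (of x)).smul (by positivity : 0 ≤ 2 * γ)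
  have h := hgram.map_exp.mul_mul_conjTranspose_same
    (diagonal fun i => Real.exp (-γ * sqnorm (x i)))
  convert h using 1
  ext i j
  rw [diagonal_conjTranspose, mul_diagonal, diagonal_mul, gaussianKernel_eq]
  simp only [map_apply, Matrix.smul_apply, mul_apply, conjTranspose_apply, of_apply, star_trivial,
    smul_eq_mul, dotProduct, ← Real.exp_add]
  ring_nf

theorem sum_gaussianKernel_add_le {ι : Type*} [Fintype ι] {d : ℕ} (γ : ℝ) {a b : ι → Fin d → ℝ}
    (hab : ∀ i, sqnorm (a i) = sqnorm (b i)) :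
    ∑ i, ∑ j, gaussianKernel γ b i j
        + 2 * γ * ∑ i, ∑ j, gaussianKernel γ b i j * (a i ⬝ᵥ a j - b i ⬝ᵥ b j)
      ≤ ∑ i, ∑ j, gaussianKernel γ a i j := by
  simp only [Finset.mul_sum, ← Finset.sum_add_distrib]
  refine Finset.sum_le_sum fun i _ => Finset.sum_le_sum fun j _ => ?_
  have hK : gaussianKernel γ a i j
      = gaussianKernel γ b i j * Real.exp (2 * γ * (a i ⬝ᵥ a j - b i ⬝ᵥ b j)) := by
    simp only [gaussianKernel_eq, hab, ← Real.exp_add]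
    ring_nf
  have hpos : 0 ≤ gaussianKernel γ b i j := (Real.exp_pos _).le
  calc gaussianKernel γ b i j + 2 * γ * (gaussianKernel γ b i j * (a i ⬝ᵥ a j - b i ⬝ᵥ b j))
      = gaussianKernel γ b i j * (2 * γ * (a i ⬝ᵥ a j - b i ⬝ᵥ b j) + 1) := by ring
    _ ≤ gaussianKernel γ a i j := hK ▸ mul_le_mul_of_nonneg_left (Real.add_one_le_exp _) hpos

theorem sum_mul_dotProduct_sub_dotProduct {ι κ : Type*} [Fintype ι] [Fintype κ]
    {c : Matrix ι ι ℝ} (hc : c.IsHermitian) (a b : ι → κ → ℝ) :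
    ∑ i, ∑ j, c i j * (a i ⬝ᵥ a j - b i ⬝ᵥ b j)
      = ∑ i, ∑ j, c i j * ((a i - b i) ⬝ᵥ (a j - b j))
        + 2 * ∑ i, ∑ j, c i j * ((a i - b i) ⬝ᵥ b j) := by
  have hswap : ∑ i, ∑ j, c i j * (b i ⬝ᵥ (a j - b j))
      = ∑ i, ∑ j, c i j * ((a i - b i) ⬝ᵥ b j) := by
    rw [Finset.sum_comm]
    refine Finset.sum_congr rfl fun i _ => Finset.sum_congr rfl fun j _ => ?_
    rw [← hc.apply i j, star_trivial, dotProduct_comm]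
  rw [two_mul, ← add_assoc]
  nth_rw 2 [← hswap]
  simp only [← Finset.sum_add_distrib]
  refine Finset.sum_congr rfl fun i _ => Finset.sum_congr rfl fun j _ => ?_
  simp only [sub_dotProduct, dotProduct_sub, dotProduct_comm (b i) (a j)]
  ring

section Procrustes

variable {n : Type*} [Fintype n] [DecidableEq n]

theorem transpose_mul_self_mul_transpose_eq_one {U V : Matrix n n ℝ} (hU : Uᵀ * U = 1)
    (hV : Vᵀ * V = 1) : (U * Vᵀ)ᵀ * (U * Vᵀ) = 1 := by
  rw [transpose_mul, transpose_transpose, Matrix.mul_assoc, ← Matrix.mul_assoc Uᵀ, hU,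
    Matrix.one_mul, mul_eq_one_comm.mp hV]

theorem apply_self_le_one_of_transpose_mul_self {A : Matrix n n ℝ} (hA : Aᵀ * A = 1) (k : n) :
    A k k ≤ 1 := by
  have hcol : ∑ l, A l k ^ 2 = 1 := by
    simpa [mul_apply, sq] using congrFun (congrFun hA k) k
  have hsq : A k k ^ 2 ≤ 1 :=
    hcol ▸ Finset.single_le_sum (fun l _ => sq_nonneg (A l k)) (Finset.mem_univ k)
  nlinarith

theorem trace_transpose_mul_svd_le {Q U V : Matrix n n ℝ} {s : n → ℝ} (hQ : Qᵀ * Q = 1)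
    (hU : Uᵀ * U = 1) (hV : Vᵀ * V = 1) (hs : ∀ k, 0 ≤ s k) :
    trace (Qᵀ * (U * diagonal s * Vᵀ)) ≤ ∑ k, s k := by
  set W := Vᵀ * Qᵀ * U
  have hW : Wᵀ * W = 1 := by
    calc Wᵀ * W = Uᵀ * (Q * ((V * Vᵀ) * Qᵀ)) * U := by
          simp only [W, transpose_mul, transpose_transpose, Matrix.mul_assoc]
      _ = 1 := by rw [mul_eq_one_comm.mp hV, Matrix.one_mul, mul_eq_one_comm.mp hQ,
          Matrix.mul_one, hU]
  have htrace : trace (Qᵀ * (U * diagonal s * Vᵀ)) = ∑ k, W k k * s k := by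
    rw [← Matrix.mul_assoc, ← Matrix.mul_assoc, trace_mul_cycle, ← Matrix.mul_assoc]
    simp [W, trace, mul_diagonal]
  rw [htrace]
  exact Finset.sum_le_sum fun k _ =>
    mul_le_of_le_one_left (hs k) (apply_self_le_one_of_transpose_mul_self hW k)

theorem trace_polar_transpose_mul_svd {U V : Matrix n n ℝ} (s : n → ℝ) (hU : Uᵀ * U = 1)
    (hV : Vᵀ * V = 1) : trace ((U * Vᵀ)ᵀ * (U * diagonal s * Vᵀ)) = ∑ k, s k := by
  have h : (U * Vᵀ)ᵀ * (U * diagonal s * Vᵀ) = V * (Uᵀ * U) * diagonal s * Vᵀ := by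
    simp only [transpose_mul, transpose_transpose, Matrix.mul_assoc]
  rw [h, hU, Matrix.mul_one, trace_mul_cycle, hV, Matrix.one_mul, trace_diagonal]

theorem trace_transpose_mul_le_of_svd {Q U V : Matrix n n ℝ} {s : n → ℝ} (hQ : Qᵀ * Q = 1)
    (hU : Uᵀ * U = 1) (hV : Vᵀ * V = 1) (hs : ∀ k, 0 ≤ s k) :
    trace (Qᵀ * (U * diagonal s * Vᵀ)) ≤ trace ((U * Vᵀ)ᵀ * (U * diagonal s * Vᵀ)) :=
  trace_polar_transpose_mul_svd s hU hV ▸ trace_transpose_mul_svd_le hQ hU hV hs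

end Procrustes

theorem trace_transpose_mul_sum_smul_vecMulVec {ι n : Type*} [Fintype ι] [Fintype n]
    (Q : Matrix n n ℝ) (c : ι → ℝ) (g : ι → n → ℝ) (v : n → ℝ) :
    trace (Qᵀ * ∑ j, c j • vecMulVec (g j) v) = ∑ j, c j * ((Q *ᵥ v) ⬝ᵥ g j) := by
  rw [Matrix.mul_sum, trace_sum]
  refine Finset.sum_congr rfl fun j _ => ?_
  rw [Matrix.mul_smul, trace_smul, mul_vecMulVec, trace_vecMulVec, mulVec_transpose,
    ← dotProduct_mulVec, dotProduct_comm, smul_eq_mul]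

section Frobenius

variable {d : ℕ}

theorem frobSq_eq_trace (A : Matrix (Fin d) (Fin d) ℝ) : frobSq A = trace (Aᵀ * A) := by
  simp only [frobSq, trace, diag, mul_apply, transpose_apply, sq]
  exact Finset.sum_comm

theorem frobSq_sub_of_transpose_mul_self {R P : Matrix (Fin d) (Fin d) ℝ} (hR : Rᵀ * R = 1)
    (hP : Pᵀ * P = 1) : frobSq (R - P) = 2 * (d - trace (Rᵀ * P)) := by
  have hPR : trace (Pᵀ * R) = trace (Rᵀ * P) := by
    rw [← trace_transpose, transpose_mul, transpose_transpose]
  rw [frobSq_eq_trace, transpose_sub, sub_mul, mul_sub, mul_sub, hR, hP, trace_sub, trace_sub,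
    trace_sub, hPR, trace_one, Fintype.card_fin]
  ring

theorem proximal_procrustes_bound {R P G : Matrix (Fin d) (Fin d) ℝ} {η : ℝ} (hR : Rᵀ * R = 1)
    (hP : Pᵀ * P = 1) (hmax : trace (Pᵀ * (G + η • P)) ≤ trace (Rᵀ * (G + η • P))) :
    η / 2 * frobSq (R - P) ≤ trace ((R - P)ᵀ * G) := by
  rw [frobSq_sub_of_transpose_mul_self hR hP, transpose_sub, sub_mul, trace_sub]
  simp only [Matrix.mul_add, Matrix.mul_smul, trace_add, trace_smul, hP, trace_one,
    Fintype.card_fin, smul_eq_mul] at hmax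
  linarith

end Frobenius

theorem wCoef_mul_kCoef {M d : ℕ} (γ : ℝ) (μ : Fin M → Fin d → ℝ)
    {R : Fin M → Matrix (Fin d) (Fin d) ℝ} (hR : ∀ i, (R i)ᵀ * R i = 1) (i j : Fin M) :
    wCoef γ μ i j * kCoef γ μ R i j = gaussianKernel γ (fun i => R i *ᵥ μ i) i j := by
  rw [gaussianKernel_eq, sqnorm_mulVec_of_transpose_mul_self (hR i),
    sqnorm_mulVec_of_transpose_mul_self (hR j)]
  rfl

theorem algorithm1_ascent_general (M d : ℕ) (γ η : ℝ) (hγ : 0 < γ)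
    (μ : Fin M → (Fin d → ℝ))
    (Rprev R : Fin M → Matrix (Fin d) (Fin d) ℝ)
    (hRprev : ∀ i, (Rprev i)ᵀ * Rprev i = 1)
    (U V : Fin M → Matrix (Fin d) (Fin d) ℝ) (s : Fin M → Fin d → ℝ)
    (hU : ∀ i, (U i)ᵀ * U i = 1) (hV : ∀ i, (V i)ᵀ * V i = 1)
    (hs : ∀ i k, 0 ≤ s i k)
    (hSVD : ∀ i, Hmat γ η μ Rprev i = U i * Matrix.diagonal (s i) * (V i)ᵀ)
    (hR : ∀ i, R i = U i * (V i)ᵀ) :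
    Lobj γ μ Rprev + 2 * γ * η * ∑ i, frobSq (R i - Rprev i) ≤ Lobj γ μ R := by
  set a : Fin M → Fin d → ℝ := fun i => R i *ᵥ μ i
  set b : Fin M → Fin d → ℝ := fun i => Rprev i *ᵥ μ i
  have hRorth (i : Fin M) : (R i)ᵀ * R i = 1 :=
    hR i ▸ transpose_mul_self_mul_transpose_eq_one (hU i) (hV i)
  have hK := posSemidef_gaussianKernel hγ.le b
  have hstep (i : Fin M) :
      η / 2 * frobSq (R i - Rprev i) ≤ ∑ j, gaussianKernel γ b i j * ((a i - b i) ⬝ᵥ b j) := by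
    have hH : Hmat γ η μ Rprev i
        = (∑ j, gaussianKernel γ b i j • vecMulVec (b j) (μ i)) + η • Rprev i := by
      simp only [Hmat, wCoef_mul_kCoef γ μ hRprev, b]
    have hmax := trace_transpose_mul_le_of_svd (hRprev i) (hU i) (hV i) (hs i)
    rw [← hR i, ← hSVD i, hH] at hmax
    have hbound := proximal_procrustes_bound (hRorth i) (hRprev i) hmax
    rwa [trace_transpose_mul_sum_smul_vecMulVec, sub_mulVec] at hbound
  have hgain := sum_gaussianKernel_add_le γ (a := a) (b := b) fun i =>
    (sqnorm_mulVec_of_transpose_mul_self (hRorth i) _).trans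
      (sqnorm_mulVec_of_transpose_mul_self (hRprev i) _).symm
  rw [sum_mul_dotProduct_sub_dotProduct hK.isHermitian] at hgain
  have hquad : 0 ≤ ∑ i, ∑ j, gaussianKernel γ b i j * ((a i - b i) ⬝ᵥ (a j - b j)) :=
    hK.sum_mul_dotProduct_nonneg (a - b)
  have hlin : η / 2 * ∑ i, frobSq (R i - Rprev i)
      ≤ ∑ i, ∑ j, gaussianKernel γ b i j * ((a i - b i) ⬝ᵥ b j) := by
    rw [Finset.mul_sum]
    exact Finset.sum_le_sum fun i _ => hstep i
  change ∑ i, ∑ j, gaussianKernel γ b i j + _ ≤ ∑ i, ∑ j, gaussianKernel γ a i j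
  nlinarith

theorem algorithm1_ascent (M d : ℕ) (γ η : ℝ) (hγ : 0 < γ) (hη : 0 < η)
    (μ : Fin M → (Fin d → ℝ))
    (Rprev R : Fin M → Matrix (Fin d) (Fin d) ℝ)
    (hRprev : ∀ i, (Rprev i)ᵀ * Rprev i = 1)
    (U V : Fin M → Matrix (Fin d) (Fin d) ℝ) (s : Fin M → Fin d → ℝ)
    (hU : ∀ i, (U i)ᵀ * U i = 1) (hV : ∀ i, (V i)ᵀ * V i = 1)
    (hs : ∀ i k, 0 ≤ s i k)
    (hSVD : ∀ i, Hmat γ η μ Rprev i = U i * Matrix.diagonal (s i) * (V i)ᵀ)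
    (hR : ∀ i, R i = U i * (V i)ᵀ) :
    Lobj γ μ Rprev + 2 * γ * η * ∑ i, frobSq (R i - Rprev i) ≤ Lobj γ μ R :=
  algorithm1_ascent_general M d γ η hγ μ Rprev R hRprev U V s hU hV hs hSVD hR
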